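/- arXiv:2203.04855 — 5 statements merged into one kernel-verified Lean document; each statement's English description precedes it below -/
import Mathlib

section
/- Let x, x', w ∈ ℝ^d and let k be an integer with ‖x − x'‖₀ ≤ k < d/2, where ‖·‖₀ counts nonzero coordinates. Let TSum_k(u) denote the sum of the coordinates of u after discarding the k largest and k smallest coordinates. Then |TSum_k(x') − Σ_{i=1}^d x_i| ≤ 8k ‖x‖_∞. -/
/-!
Every entry `e` kept by the truncation has at least `k + 1` coordinates of `x'` below it and
at least `k + 1` above it. Since `x` and `x'` differ in at most `k` coordinates, one of each
kind is a coordinate of `x`, so `|e| ≤ M := ‖x‖_∞`. Hence clipping `x'` to `[-M, M]` keeps the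
retained entries; the clipped vector differs from `x` in at most `k` coordinates, by at most
`2M` each, and its `2k` discarded entries weigh at most `M` each, so the error is at most `4kM`.
-/

open Finset

/-- Truncated sum: sort the coordinates of `u` and sum them after discarding the
`k` smallest and the `k` largest coordinates. -/
noncomputable def TSum {d : ℕ} (k : ℕ) (u : Fin d → ℝ) : ℝ :=
  (((((List.ofFn u).insertionSort (· ≤ ·)).drop k).take (d - 2 * k)).sum)

theorem List.countP_ofFn {α : Type*} {d : ℕ} (u : Fin d → α) (p : α → Prop) [DecidablePred p] :
    (List.ofFn u).countP p = #{j | p (u j)} := by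
  rw [← Multiset.coe_countP, ← Fin.univ_val_map, Multiset.countP_map]
  rfl

theorem List.abs_sum_le_length_mul {L : List ℝ} {M : ℝ} (h : ∀ b ∈ L, |b| ≤ M) :
    |L.sum| ≤ L.length * M :=
  calc |L.sum| ≤ (L.map abs).sum := by
        simpa using Multiset.abs_sum_le_sum_abs (s := (L : Multiset ℝ))
    _ ≤ (L.map abs).length • M := List.sum_le_card_nsmul _ _ (by simpa using h)
    _ = L.length * M := by simp

section Middle

variable {α : Type*} [Preorder α] [DecidableLE α] {A S C : List α} {e : α}

theorem List.Pairwise.length_lt_countP_le (h : (A ++ S ++ C).Pairwise (· ≤ ·)) (he : e ∈ S) :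
    A.length < (A ++ S ++ C).countP (· ≤ e) := by
  have hAS := (List.pairwise_append.1 (List.pairwise_append.1 h).1).2.2
  have hA : A.countP (· ≤ e) = A.length :=
    List.countP_eq_length.2 fun a ha => decide_eq_true (hAS a ha e he)
  have hS : 0 < S.countP (· ≤ e) := List.countP_pos_iff.2 ⟨e, he, decide_eq_true le_rfl⟩
  simp only [List.countP_append, hA]
  omega

theorem List.Pairwise.length_lt_countP_ge (h : (A ++ S ++ C).Pairwise (· ≤ ·)) (he : e ∈ S) :
    C.length < (A ++ S ++ C).countP (e ≤ ·) := by
  have hASC := (List.pairwise_append.1 h).2.2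
  have heAS : e ∈ A ++ S := List.mem_append_right A he
  have hC : C.countP (e ≤ ·) = C.length :=
    List.countP_eq_length.2 fun c hc => decide_eq_true (hASC e heAS c hc)
  have hAS : 0 < (A ++ S).countP (e ≤ ·) := List.countP_pos_iff.2 ⟨e, heAS, decide_eq_true le_rfl⟩
  rw [List.countP_append, hC]
  omega

end Middle

theorem exists_apply_eq_of_card_ne_lt {ι β : Type*} [Fintype ι] [DecidableEq β]
    {x x' : ι → β} {p : ι → Prop} [DecidablePred p]
    (h : #{i | x i ≠ x' i} < #{i | p i}) : ∃ i, p i ∧ x i = x' i := by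
  by_contra! hne
  exact h.not_ge (card_le_card fun i hi => by simp_all)

theorem abs_sum_sub_sum_le_card_ne_mul {ι : Type*} [Fintype ι] {f g : ι → ℝ} {M : ℝ}
    (h : ∀ i, |f i - g i| ≤ M) : |∑ i, f i - ∑ i, g i| ≤ #{i | f i ≠ g i} * M := by
  rw [← sum_sub_distrib, ← sum_filter_ne_zero]
  simp only [sub_ne_zero]
  calc _ ≤ ∑ i ∈ {i | f i ≠ g i}, |f i - g i| := abs_sum_le_sum_abs _ _
    _ ≤ #{i | f i ≠ g i} • M := sum_le_card_nsmul _ _ _ fun i _ => h i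
    _ = #{i | f i ≠ g i} * M := nsmul_eq_mul _ _

section Clip

variable {M t : ℝ}

noncomputable def clip (M t : ℝ) : ℝ := max (-M) (min M t)

theorem abs_clip_le (hM : 0 ≤ M) (t : ℝ) : |clip M t| ≤ M :=
  abs_le.2 ⟨le_max_left _ _, max_le (by linarith) (min_le_left _ _)⟩

theorem clip_eq_self (h : |t| ≤ M) : clip M t = t := by
  rw [clip, min_eq_right (abs_le.1 h).2, max_eq_right (abs_le.1 h).1]

end Clip

section Truncation

variable {d k : ℕ} {x x' : Fin d → ℝ} {M : ℝ} {A S C : List ℝ}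

theorem abs_le_of_mem_middle (hsort : (A ++ S ++ C).Pairwise (· ≤ ·))
    (hperm : (A ++ S ++ C).Perm (List.ofFn x')) (hA : k ≤ A.length) (hC : k ≤ C.length)
    (h0 : #{i | x i ≠ x' i} ≤ k) (hM : ∀ i, |x i| ≤ M) {e : ℝ} (he : e ∈ S) : |e| ≤ M := by
  have hcount (p : ℝ → Prop) [DecidablePred p] : (A ++ S ++ C).countP p = #{j | p (x' j)} := by
    rw [hperm.countP_eq, List.countP_ofFn]
  obtain ⟨i, hie, hi⟩ := exists_apply_eq_of_card_ne_lt (x := x) (x' := x') (p := (x' · ≤ e)) <| by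
    have := hsort.length_lt_countP_le he
    rw [hcount] at this
    omega
  obtain ⟨j, hje, hj⟩ := exists_apply_eq_of_card_ne_lt (x := x) (x' := x') (p := (e ≤ x' ·)) <| by
    have := hsort.length_lt_countP_ge he
    rw [hcount] at this
    omega
  rw [abs_le]
  constructor
  · linarith [neg_abs_le (x i), hM i]
  · linarith [le_abs_self (x j), hM j]

theorem abs_sum_sub_sum_le_of_perm (hperm : (A ++ S ++ C).Perm (List.ofFn x'))
    (hS : ∀ e ∈ S, |e| ≤ M) (hM : ∀ i, |x i| ≤ M) (hM0 : 0 ≤ M) (h0 : #{i | x i ≠ x' i} ≤ k) :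
    |S.sum - ∑ i, x i| ≤ (A.length + C.length + 2 * k) * M := by
  have hS_clip : (S.map (clip M)).sum = S.sum := by
    rw [List.map_congr_left fun e he => clip_eq_self (hS e he), List.map_id']
  have htotal : (A.map (clip M)).sum + S.sum + (C.map (clip M)).sum = ∑ i, clip M (x' i) := by
    rw [← hS_clip, ← List.sum_append, ← List.sum_append, ← List.map_append, ← List.map_append,
      (hperm.map _).sum_eq, List.map_ofFn, List.sum_ofFn, Function.comp_def]
  have hclip_sum (L : List ℝ) : |(L.map (clip M)).sum| ≤ L.length * M := by
    simpa using List.abs_sum_le_length_mul (List.forall_mem_map.2 fun a _ => abs_clip_le hM0 a)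
  have hne : #{i | clip M (x' i) ≠ x i} ≤ k := by
    refine le_trans (card_le_card fun i => ?_) h0
    simp only [mem_filter, mem_univ, true_and]
    intro hclip hx
    exact hclip (by rw [← hx]; exact clip_eq_self (hM i))
  have hdiff : |∑ i, clip M (x' i) - ∑ i, x i| ≤ k * (2 * M) := by
    refine (abs_sum_sub_sum_le_card_ne_mul fun i => ?_).trans (by gcongr)
    calc |clip M (x' i) - x i| ≤ |clip M (x' i)| + |x i| := abs_sub _ _
      _ ≤ 2 * M := by linarith [abs_clip_le hM0 (x' i), hM i]
  calc |S.sum - ∑ i, x i|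
      = |(∑ i, clip M (x' i) - ∑ i, x i) - (A.map (clip M)).sum - (C.map (clip M)).sum| := by
        rw [← htotal]; ring_nf
    _ ≤ k * (2 * M) + A.length * M + C.length * M :=
        (abs_sub _ _).trans (add_le_add ((abs_sub _ _).trans (add_le_add hdiff (hclip_sum A)))
          (hclip_sum C))
    _ = (A.length + C.length + 2 * k) * M := by ring

end Truncation

theorem tsum_truncation_bound_general {d : ℕ} (k : ℕ) (x x' : Fin d → ℝ)
    (h0 : (Finset.univ.filter (fun i => x i ≠ x' i)).card ≤ k) :
    |TSum k x' - ∑ i, x i| ≤ 8 * k * (⨆ i, |x i|) := by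
  set M := ⨆ i, |x i|
  have hM i : |x i| ≤ M := le_ciSup (f := fun i => |x i|) (Set.finite_range _).bddAbove i
  have hM0 : 0 ≤ M := Real.iSup_nonneg fun i => abs_nonneg (x i)
  set l := (List.ofFn x').insertionSort (· ≤ ·)
  have hlen : l.length = d := (List.perm_insertionSort _ _).length_eq.trans (List.length_ofFn)
  set A := l.take k
  set S := (l.drop k).take (d - 2 * k)
  set C := (l.drop k).drop (d - 2 * k)
  have hl : A ++ S ++ C = l := by
    rw [List.append_assoc, List.take_append_drop, List.take_append_drop]
  have hperm : (A ++ S ++ C).Perm (List.ofFn x') := hl ▸ List.perm_insertionSort _ _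
  have hsort : (A ++ S ++ C).Pairwise (· ≤ ·) := hl ▸ List.pairwise_insertionSort _ _
  have hS e (he : e ∈ S) : |e| ≤ M := by
    have : 0 < S.length := List.length_pos_of_mem he
    simp only [S, List.length_take, List.length_drop, hlen] at this
    exact abs_le_of_mem_middle hsort hperm (by simp [A, hlen]; omega) (by simp [C, hlen]; omega)
      h0 hM he
  have hlengths : (A.length + C.length + 2 * k : ℝ) ≤ 8 * k := by
    have : A.length + C.length + 2 * k ≤ 8 * k := by
      simp only [A, C, List.length_take, List.length_drop, hlen]
      omega
    exact_mod_cast this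
  exact (abs_sum_sub_sum_le_of_perm hperm hS hM hM0 h0).trans
    (mul_le_mul_of_nonneg_right hlengths hM0)

/-- If `x, x' ∈ ℝᵈ` differ in at most `k < d/2` coordinates, then
`|TSum_k(x') - Σᵢ xᵢ| ≤ 8 k ‖x‖_∞`. -/
theorem tsum_truncation_bound {d : ℕ} (k : ℕ) (x x' : Fin d → ℝ)
    (h0 : (Finset.univ.filter (fun i => x i ≠ x' i)).card ≤ k)
    (hk : 2 * k < d) :
    |TSum k x' - ∑ i, x i| ≤ 8 * k * (⨆ i, |x i|) :=
  tsum_truncation_bound_general k x x' h0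
end

section
/- Let q be a probability density on ℝ satisfying: q positive and twice continuously differentiable, ∫ q' = 0, and E_{Z∼q}[sup_{t∈[Z−ζ,Z+ζ]} |(d²/dt²) log q(t)|²] < ∞ for some ζ > 0. Let μ_d = c/√d with c > 0, let q₊^{(d)}, q₋^{(d)} be the laws of Z + μ_d and Z − μ_d, and let (X₊, X₋) be any maximal coupling of them. Then for every δ > 0, P(X₊ ≠ X₋) / d^{−1/2+δ} → 0 as d → ∞. -/
/-!
A maximal coupling does at least as well as the explicit coupling that puts the common part
`min f g` of the two densities on the diagonal and couples the excesses independently, so its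
mismatch probability is at most `∫ (f - g)⁺ ≤ ∫ |q (x - μ) - q (x + μ)| ≤ 2 μ ∫ |q'|`, which is
`O(d^{-1/2})` as soon as `q' ∈ L¹`.

With `ℓ = (log q)'` we have `q' = ℓ q` and `ℓ² q = q'' - ℓ' q`. Integrating over `[a, b]` with
`q'(a) > 0 > q'(b)` bounds `∫ₐᵇ ℓ² q` by `∫ |ℓ'| q`, which is finite by the moment hypothesis; such
endpoints exist arbitrarily far out because `q` is positive and integrable. So the Fisher
information `∫ ℓ² q` is finite, and `|q'| ≤ (ℓ² q + q) / 2` is integrable.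
-/

open MeasureTheory Filter Set
open scoped ENNReal

theorem MeasureTheory.Integrable.exists_deriv_neg_of_pos {f : ℝ → ℝ} (hf : Integrable f)
    (hpos : ∀ x, 0 < f x) (hd : Differentiable ℝ f) (R : ℝ) : ∃ b, R ≤ b ∧ deriv f b < 0 := by
  by_contra! hnonneg
  have hmono : MonotoneOn f (Ici R) :=
    monotoneOn_of_deriv_nonneg (convex_Ici R) hd.continuous.continuousOn hd.differentiableOn
      fun x hx => hnonneg x (by rw [interior_Ici] at hx; exact hx.le)
  have hfin := hf.measure_ge_lt_top (hpos R)
  have hsub : Ici R ⊆ {x | f R ≤ f x} := fun x hx => hmono self_mem_Ici hx hx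
  exact hfin.ne (measure_mono_top hsub Real.volume_Ici)

theorem MeasureTheory.Integrable.exists_deriv_pos_of_pos {f : ℝ → ℝ} (hf : Integrable f)
    (hpos : ∀ x, 0 < f x) (hd : Differentiable ℝ f) (R : ℝ) : ∃ a, a ≤ R ∧ 0 < deriv f a := by
  obtain ⟨b, hb, hderiv⟩ := hf.comp_neg.exists_deriv_neg_of_pos (fun x => hpos (-x))
    (hd.comp differentiable_neg) (-R)
  rw [deriv_comp_neg] at hderiv
  exact ⟨-b, by linarith, by linarith⟩

theorem integrable_mul_of_integrable_sq_mul {α : Type*} [MeasurableSpace α] {μ : Measure α}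
    {g w q : α → ℝ} (hq : Integrable q μ) (hq0 : ∀ x, 0 ≤ q x)
    (hw : Integrable (fun x => w x ^ 2 * q x) μ) (hg : AEStronglyMeasurable g μ)
    (hgw : ∀ x, |g x| ≤ w x) : Integrable (fun x => g x * q x) μ := by
  refine ((hw.add hq).div_const 2).mono' (hg.mul hq.1) (ae_of_all _ fun x => ?_)
  rw [Real.norm_eq_abs, abs_mul, abs_of_nonneg (hq0 x)]
  show |g x| * q x ≤ (w x ^ 2 * q x + q x) / 2
  nlinarith [mul_nonneg (sq_nonneg (w x - 1)) (hq0 x), mul_le_mul_of_nonneg_right (hgw x) (hq0 x)]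

theorem abs_le_sSup_image_abs_Icc {g : ℝ → ℝ} (hg : Continuous g) {ζ : ℝ} (hζ : 0 ≤ ζ) (z : ℝ) :
    |g z| ≤ sSup ((fun t => |g t|) '' Icc (z - ζ) (z + ζ)) :=
  le_csSup (isCompact_Icc.image hg.abs).bddAbove ⟨z, ⟨by linarith, by linarith⟩, rfl⟩

section LogDensity

variable {q : ℝ → ℝ}

theorem deriv_eq_deriv_log_mul (hpos : ∀ x, 0 < q x) (hd : Differentiable ℝ q) (x : ℝ) :
    deriv q x = deriv (fun s => Real.log (q s)) x * q x := by
  rw [deriv.log (hd x) (hpos x).ne', div_mul_cancel₀ _ (hpos x).ne']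

theorem sq_deriv_log_mul_eq (hpos : ∀ x, 0 < q x) (hq : ContDiff ℝ 2 q) (x : ℝ) :
    deriv (fun s => Real.log (q s)) x ^ 2 * q x
      = deriv (deriv q) x - deriv (deriv fun s => Real.log (q s)) x * q x := by
  have hd : Differentiable ℝ q := hq.differentiable (by norm_num)
  have hd' : Differentiable ℝ (deriv q) := (hq.deriv' (n := 1)).differentiable one_ne_zero
  have hlog : deriv (fun s => Real.log (q s)) = fun x => deriv q x / q x :=
    funext fun x => deriv.log (hd x) (hpos x).ne'
  have h2 : deriv (fun x => deriv q x / q x) x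
      = (deriv (deriv q) x * q x - deriv q x * deriv q x) / q x ^ 2 :=
    ((hd' x).hasDerivAt.div (hd x).hasDerivAt (hpos x).ne').deriv
  rw [hlog, h2]
  field_simp [(hpos x).ne']
  ring

theorem intervalIntegral_sq_deriv_log_mul_le (hpos : ∀ x, 0 < q x) (hq : ContDiff ℝ 2 q)
    (hcurv : Integrable fun x => deriv (deriv fun s => Real.log (q s)) x * q x) {a b : ℝ}
    (hab : a ≤ b) (ha : 0 ≤ deriv q a) (hb : deriv q b ≤ 0) :
    ∫ x in a..b, deriv (fun s => Real.log (q s)) x ^ 2 * q x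
      ≤ ∫ x, |deriv (deriv fun s => Real.log (q s)) x * q x| := by
  have hq' : ContDiff ℝ 1 (deriv q) := hq.deriv' (n := 1)
  have hq'' : IntervalIntegrable (deriv (deriv q)) volume a b :=
    (hq'.continuous_deriv le_rfl).intervalIntegrable a b
  have hsplit : ∫ x in a..b, deriv (fun s => Real.log (q s)) x ^ 2 * q x = (deriv q b - deriv q a)
      - ∫ x in a..b, deriv (deriv fun s => Real.log (q s)) x * q x := by
    simp_rw [sq_deriv_log_mul_eq hpos hq]
    rw [intervalIntegral.integral_sub hq'' hcurv.intervalIntegrable,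
      intervalIntegral.integral_deriv_eq_sub (fun x _ => hq'.differentiable one_ne_zero x) hq'']
  have hcurv_ab : |∫ x in a..b, deriv (deriv fun s => Real.log (q s)) x * q x|
      ≤ ∫ x, |deriv (deriv fun s => Real.log (q s)) x * q x| :=
    (intervalIntegral.abs_integral_le_integral_abs hab).trans <| by
      rw [intervalIntegral.integral_of_le hab]
      exact setIntegral_le_integral hcurv.abs (ae_of_all _ fun x => abs_nonneg _)
  rw [hsplit]
  linarith [neg_abs_le (∫ x in a..b, deriv (deriv fun s => Real.log (q s)) x * q x)]

theorem integrable_sq_deriv_log_mul (hpos : ∀ x, 0 < q x) (hq : ContDiff ℝ 2 q)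
    (hqi : Integrable q)
    (hcurv : Integrable fun x => deriv (deriv fun s => Real.log (q s)) x * q x) :
    Integrable fun x => deriv (fun s => Real.log (q s)) x ^ 2 * q x := by
  have hd : Differentiable ℝ q := hq.differentiable (by norm_num)
  have hℓ : Continuous (deriv fun s => Real.log (q s)) :=
    (hq.log fun x => (hpos x).ne').continuous_deriv (by norm_num)
  have hcont : Continuous fun x => deriv (fun s => Real.log (q s)) x ^ 2 * q x := by fun_prop
  choose b hb_ge hb_neg using hqi.exists_deriv_neg_of_pos hpos hd
  choose a ha_le ha_pos using hqi.exists_deriv_pos_of_pos hpos hd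
  refine integrable_of_intervalIntegral_norm_bounded (a := fun n : ℕ => a (-n))
    (b := fun n => b n) (∫ x, |deriv (deriv fun s => Real.log (q s)) x * q x|)
    (fun n => hcont.integrableOn_Icc.mono_set Ioc_subset_Icc_self)
    (tendsto_atBot_mono (fun n => ha_le _)
      (tendsto_neg_atTop_atBot.comp tendsto_natCast_atTop_atTop))
    (tendsto_atTop_mono (fun n => hb_ge _) tendsto_natCast_atTop_atTop)
    (Eventually.of_forall fun n => ?_)
  have hab : a (-n) ≤ b n := by linarith [ha_le (-n), hb_ge n, (Nat.cast_nonneg n : (0 : ℝ) ≤ n)]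
  calc ∫ x in a (-n)..b n, ‖deriv (fun s => Real.log (q s)) x ^ 2 * q x‖
      = ∫ x in a (-n)..b n, deriv (fun s => Real.log (q s)) x ^ 2 * q x :=
        intervalIntegral.integral_congr fun x _ => Real.norm_of_nonneg (by positivity [hpos x])
    _ ≤ _ := intervalIntegral_sq_deriv_log_mul_le hpos hq hcurv hab (ha_pos _).le (hb_neg _).le

theorem integrable_deriv_of_integrable_deriv_deriv_log_mul (hpos : ∀ x, 0 < q x)
    (hq : ContDiff ℝ 2 q) (hqi : Integrable q)
    (hcurv : Integrable fun x => deriv (deriv fun s => Real.log (q s)) x * q x) :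
    Integrable (deriv q) := by
  have hℓ : Continuous (deriv fun s => Real.log (q s)) :=
    (hq.log fun x => (hpos x).ne').continuous_deriv (by norm_num)
  have hfisher := integrable_sq_deriv_log_mul hpos hq hqi hcurv
  simp_rw [← sq_abs (deriv (fun s => Real.log (q s)) _)] at hfisher
  have := integrable_mul_of_integrable_sq_mul hqi (fun x => (hpos x).le) hfisher
    hℓ.aestronglyMeasurable fun x => le_rfl
  simpa only [← deriv_eq_deriv_log_mul hpos (hq.differentiable (by norm_num))] using this

end LogDensity

theorem lintegral_enorm_sub_comp_add_le {E : Type*} [NormedAddCommGroup E] [NormedSpace ℝ E]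
    {f : ℝ → E} (hf : ContDiff ℝ 1 f) {a b : ℝ} (hab : a ≤ b) :
    ∫⁻ x, ‖f (x + b) - f (x + a)‖ₑ ≤ ENNReal.ofReal (b - a) * ∫⁻ x, ‖deriv f x‖ₑ := by
  have hpoint : ∀ x, ‖f (x + b) - f (x + a)‖ₑ ≤ ∫⁻ s in Icc a b, ‖deriv f (x + s)‖ₑ := by
    intro x
    have hshift : ContDiff ℝ 1 fun s => f (x + s) := hf.comp (contDiff_const.add contDiff_id)
    simpa only [deriv_comp_const_add] using
      enorm_sub_le_lintegral_deriv_of_contDiffOn_Icc hshift.contDiffOn hab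
  have hmeas : Measurable fun p : ℝ × ℝ => ‖deriv f (p.1 + p.2)‖ₑ :=
    ((hf.continuous_deriv le_rfl).comp continuous_add).enorm.measurable
  calc ∫⁻ x, ‖f (x + b) - f (x + a)‖ₑ
      ≤ ∫⁻ x, ∫⁻ s in Icc a b, ‖deriv f (x + s)‖ₑ := lintegral_mono hpoint
    _ = ∫⁻ s in Icc a b, ∫⁻ x, ‖deriv f (x + s)‖ₑ := lintegral_lintegral_swap hmeas.aemeasurable
    _ = ENNReal.ofReal (b - a) * ∫⁻ x, ‖deriv f x‖ₑ := by
      simp only [lintegral_add_right_eq_self (fun x => ‖deriv f x‖ₑ), setLIntegral_const,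
        Real.volume_Icc, mul_comm]

section Coupling

variable {α : Type*} [MeasurableSpace α]

/-- If `R univ = 0` then `R = 0`, so the junk factor `0⁻¹ = ∞` only multiplies the zero measure. -/
noncomputable def diagonalCoupling (M R S : Measure α) : Measure (α × α) :=
  M.map Function.diag + (R univ)⁻¹ • R.prod S

theorem inv_measure_univ_smul_smul_eq_self {R : Measure α} [IsFiniteMeasure R] {c : ℝ≥0∞}
    (h : R univ = c) : (R univ)⁻¹ • (c • R) = R := by
  rcases eq_or_ne (R univ) 0 with h0 | h0
  · simp [Measure.measure_univ_eq_zero.mp h0]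
  · rw [smul_smul, ← h, ENNReal.inv_mul_cancel h0 (measure_ne_top R univ), one_smul]

variable (M : Measure α) {R S : Measure α}

theorem map_fst_diagonalCoupling [IsFiniteMeasure R] [SFinite S] (h : R univ = S univ) :
    (diagonalCoupling M R S).map Prod.fst = M + R := by
  rw [diagonalCoupling, Measure.map_add _ _ measurable_fst, Measure.map_smul,
    Measure.map_map measurable_fst measurable_diag, Measure.map_fst_prod,
    inv_measure_univ_smul_smul_eq_self h, Function.fst_comp_diag, Measure.map_id]

theorem map_snd_diagonalCoupling [SFinite R] [IsFiniteMeasure S] (h : R univ = S univ) :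
    (diagonalCoupling M R S).map Prod.snd = M + S := by
  rw [diagonalCoupling, Measure.map_add _ _ measurable_snd, Measure.map_smul,
    Measure.map_map measurable_snd measurable_diag, Measure.map_snd_prod,
    h, inv_measure_univ_smul_smul_eq_self rfl, Function.snd_comp_diag, Measure.map_id]

theorem diagonalCoupling_apply_ne_le [MeasurableEq α] [IsFiniteMeasure R] [SFinite S]
    (h : R univ = S univ) : diagonalCoupling M R S {p | p.1 ≠ p.2} ≤ R univ := by
  have hdiag : M.map Function.diag {p : α × α | p.1 ≠ p.2} = 0 :=
    (Measure.map_apply measurable_diag measurableSet_diagonal.compl).trans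
      (measure_mono_null (fun _ hx => (hx rfl).elim) measure_empty)
  rw [diagonalCoupling, Measure.add_apply, hdiag, zero_add, Measure.smul_apply, smul_eq_mul]
  calc (R univ)⁻¹ * R.prod S {p | p.1 ≠ p.2} ≤ (R univ)⁻¹ * (R univ * S univ) := by
        rw [← Measure.prod_prod, univ_prod_univ]
        gcongr
        exact subset_univ _
    _ = R univ := by
      rcases eq_or_ne (R univ) 0 with h0 | h0
      · simp [h0]
      · rw [← h, ← mul_assoc, ENNReal.inv_mul_cancel h0 (measure_ne_top R univ), one_mul]

theorem exists_coupling_withDensity_measure_ne_le [MeasurableEq α] (ν : Measure α)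
    {f g : α → ℝ≥0∞} (hf : Measurable f) (hg : Measurable g)
    (hf1 : ∫⁻ x, f x ∂ν = 1) (hg1 : ∫⁻ x, g x ∂ν = 1) :
    ∃ π : Measure (α × α), IsProbabilityMeasure π ∧
      π.map Prod.fst = ν.withDensity f ∧ π.map Prod.snd = ν.withDensity g ∧
      π {p | p.1 ≠ p.2} ≤ ∫⁻ x, f x - g x ∂ν := by
  set m : α → ℝ≥0∞ := fun x => min (f x) (g x)
  have hm : Measurable m := hf.min hg
  have hm_fin : ∫⁻ x, m x ∂ν ≠ ⊤ :=
    ne_top_of_le_ne_top (hf1 ▸ ENNReal.one_ne_top) (lintegral_mono fun x => min_le_left _ _)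
  have hexcess : ∀ h : α → ℝ≥0∞, ∫⁻ x, h x ∂ν = 1 → m ≤ h →
      ν.withDensity (h - m) univ = 1 - ∫⁻ x, m x ∂ν := fun h h1 hmh => by
    rw [withDensity_apply _ MeasurableSet.univ, Measure.restrict_univ, Pi.sub_def,
      lintegral_sub hm hm_fin (ae_of_all _ hmh), h1]
  have hsplit : ∀ h : α → ℝ≥0∞, m ≤ h → ν.withDensity m + ν.withDensity (h - m) = ν.withDensity h :=
    fun h hmh => by rw [← withDensity_add_left hm, add_tsub_cancel_of_le hmh]
  have hfm : m ≤ f := fun x => min_le_left _ _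
  have hgm : m ≤ g := fun x => min_le_right _ _
  have hRS : ν.withDensity (f - m) univ = ν.withDensity (g - m) univ := by
    rw [hexcess f hf1 hfm, hexcess g hg1 hgm]
  have : IsFiniteMeasure (ν.withDensity (f - m)) :=
    ⟨by rw [hexcess f hf1 hfm]; exact tsub_lt_of_lt ENNReal.one_lt_top⟩
  have : IsFiniteMeasure (ν.withDensity (g - m)) :=
    ⟨by rw [hexcess g hg1 hgm]; exact tsub_lt_of_lt ENNReal.one_lt_top⟩
  set π := diagonalCoupling (ν.withDensity m) (ν.withDensity (f - m)) (ν.withDensity (g - m))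
  have hfst : π.map Prod.fst = ν.withDensity f := by
    rw [map_fst_diagonalCoupling _ hRS, hsplit f hfm]
  refine ⟨π, ⟨?_⟩, hfst, by rw [map_snd_diagonalCoupling _ hRS, hsplit g hgm], ?_⟩
  · rw [← preimage_univ (f := Prod.fst), ← Measure.map_apply measurable_fst MeasurableSet.univ,
      hfst, withDensity_apply _ MeasurableSet.univ, Measure.restrict_univ, hf1]
  · calc π {p | p.1 ≠ p.2} ≤ ν.withDensity (f - m) univ := diagonalCoupling_apply_ne_le _ hRS
      _ = ∫⁻ x, f x - g x ∂ν := by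
        rw [withDensity_apply _ MeasurableSet.univ, Measure.restrict_univ]
        exact lintegral_congr fun x => tsub_min

end Coupling

theorem measure_ne_le_of_forall_coupling_shift {q : ℝ → ℝ} (hq : ContDiff ℝ 1 q)
    (hq0 : ∀ x, 0 ≤ q x) (hprob : ∫ x, q x = 1) {μ : ℝ} (hμ : 0 ≤ μ) {P : Measure (ℝ × ℝ)}
    (hP : ∀ π' : Measure (ℝ × ℝ), IsProbabilityMeasure π' →
      π'.map Prod.fst = volume.withDensity (fun x => ENNReal.ofReal (q (x - μ))) →
      π'.map Prod.snd = volume.withDensity (fun x => ENNReal.ofReal (q (x + μ))) →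
      P {p | p.1 ≠ p.2} ≤ π' {p | p.1 ≠ p.2}) :
    P {p | p.1 ≠ p.2} ≤ ENNReal.ofReal (2 * μ) * ∫⁻ x, ‖deriv q x‖ₑ := by
  have hqi : Integrable q := Integrable.of_integral_ne_zero (by simp [hprob])
  have hmass : ∫⁻ x, ENNReal.ofReal (q x) = 1 := by
    rw [← ofReal_integral_eq_lintegral_ofReal hqi (ae_of_all _ hq0), hprob, ENNReal.ofReal_one]
  have hmeas : Measurable fun x => ENNReal.ofReal (q x) := hq.continuous.measurable.ennreal_ofReal
  obtain ⟨π', hπ', hfst, hsnd, hne⟩ := exists_coupling_withDensity_measure_ne_le volume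
    (hmeas.comp (measurable_sub_const μ)) (hmeas.comp (measurable_add_const μ))
    ((lintegral_sub_right_eq_self _ μ).trans hmass) ((lintegral_add_right_eq_self _ μ).trans hmass)
  calc P {p | p.1 ≠ p.2} ≤ π' {p | p.1 ≠ p.2} := hP π' hπ' hfst hsnd
    _ ≤ ∫⁻ x, ENNReal.ofReal (q (x - μ)) - ENNReal.ofReal (q (x + μ)) := hne
    _ ≤ ∫⁻ x, ‖q (x + μ) - q (x + -μ)‖ₑ := lintegral_mono fun x => by
      rw [← ENNReal.ofReal_sub _ (hq0 _), enorm_sub_rev, ← sub_eq_add_neg, Real.enorm_eq_ofReal_abs]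
      exact ENNReal.ofReal_le_ofReal (le_abs_self _)
    _ ≤ ENNReal.ofReal (μ - -μ) * ∫⁻ x, ‖deriv q x‖ₑ :=
      lintegral_enorm_sub_comp_add_le hq (by linarith)
    _ = ENNReal.ofReal (2 * μ) * ∫⁻ x, ‖deriv q x‖ₑ := by ring_nf

theorem tendsto_div_rpow_of_le_div_sqrt {u : ℕ → ℝ} {C δ : ℝ} (hu0 : ∀ n, 0 ≤ u n)
    (hu : ∀ n, u n ≤ C / Real.sqrt n) (hδ : 0 < δ) :
    Tendsto (fun n : ℕ => u n / (n : ℝ) ^ (-(1 : ℝ) / 2 + δ)) atTop (nhds 0) := by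
  have hlim : Tendsto (fun n : ℕ => C * (n : ℝ) ^ (-δ)) atTop (nhds 0) := by
    simpa using ((tendsto_rpow_neg_atTop hδ).comp tendsto_natCast_atTop_atTop).const_mul C
  refine squeeze_zero' (Eventually.of_forall fun n => div_nonneg (hu0 n) (by positivity)) ?_ hlim
  filter_upwards [eventually_gt_atTop 0] with n hn
  have hn : (0 : ℝ) < n := Nat.cast_pos.mpr hn
  calc u n / (n : ℝ) ^ (-(1 : ℝ) / 2 + δ) ≤ C / Real.sqrt n / (n : ℝ) ^ (-(1 : ℝ) / 2 + δ) := by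
        gcongr
        exact hu n
    _ = C * (n : ℝ) ^ (-δ) := by
      rw [Real.sqrt_eq_rpow, div_div, ← Real.rpow_add hn, Real.rpow_neg hn.le]
      ring_nf

theorem maximal_coupling_mismatch_decay_general (q : ℝ → ℝ) (hpos : ∀ z, 0 < q z)
    (hsmooth : ContDiff ℝ 2 q)
    (hprob : ∫ z : ℝ, q z = 1)
    (ζ : ℝ) (hζ : 0 < ζ)
    (hmom : Integrable (fun z : ℝ =>
      (sSup ((fun t => |deriv (deriv (fun s => Real.log (q s))) t|) '' Set.Icc (z - ζ) (z + ζ))) ^ 2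
        * q z))
    (c : ℝ) (hc : 0 < c) (μd : ℕ → ℝ) (hμ : ∀ d, μd d = c / Real.sqrt d)
    (π : ℕ → Measure (ℝ × ℝ))
    (hmax : ∀ d, ∀ π' : Measure (ℝ × ℝ), IsProbabilityMeasure π' →
      π'.map Prod.fst = volume.withDensity (fun x => ENNReal.ofReal (q (x - μd d))) →
      π'.map Prod.snd = volume.withDensity (fun x => ENNReal.ofReal (q (x + μd d))) →
      (π d) {p | p.1 ≠ p.2} ≤ π' {p | p.1 ≠ p.2}) :
    ∀ δ > (0 : ℝ), Tendsto
      (fun d : ℕ => ((π d) {p | p.1 ≠ p.2}).toReal / (d : ℝ) ^ (-(1 : ℝ) / 2 + δ))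
      atTop (nhds 0) := by
  intro δ hδ
  have hqi : Integrable q := Integrable.of_integral_ne_zero (by simp [hprob])
  have hcurv_cont : Continuous (deriv (deriv fun s => Real.log (q s))) :=
    ((hsmooth.log fun x => (hpos x).ne').deriv' (n := 1)).continuous_deriv le_rfl
  have hcurv : Integrable fun z => deriv (deriv fun s => Real.log (q s)) z * q z :=
    integrable_mul_of_integrable_sq_mul hqi (fun z => (hpos z).le) hmom
      hcurv_cont.aestronglyMeasurable (abs_le_sSup_image_abs_Icc hcurv_cont hζ.le)
  set K := ∫⁻ x, ‖deriv q x‖ₑ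
  have hK : K ≠ ∞ :=
    (integrable_deriv_of_integrable_deriv_deriv_log_mul hpos hsmooth hqi hcurv).2.ne
  refine tendsto_div_rpow_of_le_div_sqrt (C := 2 * c * K.toReal)
    (fun d => ENNReal.toReal_nonneg) (fun d => ?_) hδ
  have hμd : 0 ≤ μd d := by rw [hμ d]; positivity
  calc ((π d) {p | p.1 ≠ p.2}).toReal ≤ (ENNReal.ofReal (2 * μd d) * K).toReal :=
        ENNReal.toReal_mono (ENNReal.mul_ne_top ENNReal.ofReal_ne_top hK)
          (measure_ne_le_of_forall_coupling_shift (hsmooth.of_le one_le_two)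
            (fun x => (hpos x).le) hprob hμd (hmax d))
    _ = 2 * c * K.toReal / Real.sqrt d := by
      rw [ENNReal.toReal_mul, ENNReal.toReal_ofReal (by positivity), hμ d]
      ring

/-- Let `q` be a positive, twice continuously differentiable probability
density with `∫ q' = 0` and `E_{Z∼q}[sup_{t∈[Z-ζ,Z+ζ]} |(d²/dt²) log q(t)|²] < ∞` for
some `ζ > 0`. With `μ_d = c/√d` (`c > 0`), let `π_d` be any maximal coupling (one
minimizing the mismatch probability) of the laws of `Z + μ_d` and `Z - μ_d`, i.e. of the
densities `q(· - μ_d)` and `q(· + μ_d)`. Then for every `δ > 0`,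
`P(X₊ ≠ X₋) / d^{-1/2+δ} → 0` as `d → ∞`. -/
theorem maximal_coupling_mismatch_decay (q : ℝ → ℝ) (hpos : ∀ z, 0 < q z)
    (hsmooth : ContDiff ℝ 2 q)
    (hprob : ∫ z : ℝ, q z = 1)
    (hq' : ∫ z : ℝ, deriv q z = 0)
    (ζ : ℝ) (hζ : 0 < ζ)
    (hmom : Integrable (fun z : ℝ =>
      (sSup ((fun t => |deriv (deriv (fun s => Real.log (q s))) t|) '' Set.Icc (z - ζ) (z + ζ))) ^ 2
        * q z))
    (c : ℝ) (hc : 0 < c) (μd : ℕ → ℝ) (hμ : ∀ d, μd d = c / Real.sqrt d)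
    (π : ℕ → Measure (ℝ × ℝ)) (hπprob : ∀ d, IsProbabilityMeasure (π d))
    (hfst : ∀ d, (π d).map Prod.fst
      = volume.withDensity (fun x => ENNReal.ofReal (q (x - μd d))))
    (hsnd : ∀ d, (π d).map Prod.snd
      = volume.withDensity (fun x => ENNReal.ofReal (q (x + μd d))))
    (hmax : ∀ d, ∀ π' : Measure (ℝ × ℝ), IsProbabilityMeasure π' →
      π'.map Prod.fst = volume.withDensity (fun x => ENNReal.ofReal (q (x - μd d))) →
      π'.map Prod.snd = volume.withDensity (fun x => ENNReal.ofReal (q (x + μd d))) →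
      (π d) {p | p.1 ≠ p.2} ≤ π' {p | p.1 ≠ p.2}) :
    ∀ δ > (0 : ℝ), Tendsto
      (fun d : ℕ => ((π d) {p | p.1 ≠ p.2}).toReal / (d : ℝ) ^ (-(1 : ℝ) / 2 + δ))
      atTop (nhds 0) :=
  maximal_coupling_mismatch_decay_general q hpos hsmooth hprob ζ hζ hmom c hc μd hμ π hmax
end

section
/- Let Z₁, …, Z_d be i.i.d. with density q(z) = exp(ψ(z))/A, ψ a polynomial of even degree 2n with negative leading coefficient. Then there exists a constant C₄ > 0 such that P( max_{1≤i≤d} |ψ'(Z_i)| > C₄ (log d)^{1 − 1/(2n)} ) → 0 as d → ∞. -/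
/-!
Let `N = deg ψ` and `c = -lead ψ / 2`. Since `ψ + c X^N` again has even degree and negative
leading coefficient, `e^{ψ(z) + c z^N}` is integrable: the law of `Z_i`, the exponential tilt
of Lebesgue measure by `ψ`, has a finite exponential moment `M = E e^{c Z^N}`. Markov's
inequality and a union bound give `P(max_{i<d} Z_i^N ≥ (2/c) log d) ≤ d · M e^{-2 log d} = M/d`,
while off this event `|ψ'(Z_i)| ≤ C max(1, |Z_i|)^{N-1} ≤ C ((2/c) log d)^{1-1/N}`.
-/

open MeasureTheory Real Polynomial Filter Topology

lemma sq_sub_one_le_pow {N : ℕ} (heven : Even N) (hN : 0 < N) (z : ℝ) : z ^ 2 - 1 ≤ z ^ N := by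
  obtain ⟨m, rfl⟩ := heven
  rw [← two_mul, pow_mul]
  rcases le_or_gt 1 (z ^ 2) with h | h
  · linarith [le_self_pow₀ h (by omega : m ≠ 0)]
  · linarith [pow_nonneg (sq_nonneg z) m]

lemma pow_rpow_one_sub_inv {y : ℝ} (hy : 0 ≤ y) {m : ℕ} (hm : 0 < m) :
    (y ^ m) ^ (1 - 1 / (m : ℝ)) = y ^ (m - 1) := by
  rw [← rpow_natCast y m, ← rpow_mul hy, ← rpow_natCast]
  congr 1
  have : (m : ℝ) ≠ 0 := by positivity
  push_cast [Nat.cast_sub hm]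
  field_simp

lemma lt_pow_of_rpow_one_sub_inv_lt {t y : ℝ} (hy : 0 ≤ y) {m : ℕ} (hm : 0 < m)
    (h : t ^ (1 - 1 / (m : ℝ)) < y ^ (m - 1)) : t < y ^ m := by
  contrapose! h
  rw [← pow_rpow_one_sub_inv hy hm]
  have : 1 / (m : ℝ) ≤ 1 := div_le_one_of_le₀ (by exact_mod_cast hm) (by positivity)
  exact rpow_le_rpow (by positivity) h (by linarith)

lemma lt_pow_of_rpow_one_sub_inv_lt_max_one_pow {t x : ℝ} {m : ℕ} (hm : 0 < m) (heven : Even m)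
    (ht : 1 ≤ t) (h : t ^ (1 - 1 / (m : ℝ)) < max 1 |x| ^ (m - 1)) : t < x ^ m := by
  have := lt_pow_of_rpow_one_sub_inv_lt (zero_le_one.trans (le_max_left 1 |x|)) hm h
  rcases le_total |x| 1 with hx | hx
  · rw [max_eq_left hx, one_pow] at this
    linarith
  · rwa [max_eq_right hx, heven.pow_abs] at this

lemma measure_le_le_exp_mul_lintegral {α : Type*} [MeasurableSpace α] (ν : Measure α)
    {X : α → ℝ} (hX : AEMeasurable X ν) {c : ℝ} (hc : 0 ≤ c) (t : ℝ) :
    ν {x | t ≤ X x} ≤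
      ENNReal.ofReal (exp (-(c * t))) * ∫⁻ x, ENNReal.ofReal (exp (c * X x)) ∂ν := by
  calc ν {x | t ≤ X x}
      ≤ ν {x | ENNReal.ofReal (exp (c * t)) ≤ ENNReal.ofReal (exp (c * X x))} :=
        measure_mono fun x hx =>
          ENNReal.ofReal_le_ofReal (exp_le_exp.2 (mul_le_mul_of_nonneg_left hx hc))
    _ ≤ (∫⁻ x, ENNReal.ofReal (exp (c * X x)) ∂ν) / ENNReal.ofReal (exp (c * t)) :=
        meas_ge_le_lintegral_div (by fun_prop) (by simpa using exp_pos _) ENNReal.ofReal_ne_top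
    _ = _ := by
        rw [div_eq_mul_inv, mul_comm, exp_neg, ENNReal.ofReal_inv_of_pos (exp_pos _)]

lemma measure_exists_lt_mem_le {Ω α : Type*} [MeasurableSpace Ω] [MeasurableSpace α]
    {P : Measure Ω} {μ : Measure α} {Z : ℕ → Ω → α} (hZ : ∀ i, AEMeasurable (Z i) P)
    (hlaw : ∀ i, P.map (Z i) = μ) {S : Set α} (hS : MeasurableSet S) (d : ℕ) :
    P {ω | ∃ i < d, Z i ω ∈ S} ≤ d * μ S := by
  have hunion : {ω | ∃ i < d, Z i ω ∈ S} = ⋃ i ∈ Finset.range d, Z i ⁻¹' S := by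
    ext ω; simp
  calc P {ω | ∃ i < d, Z i ω ∈ S} ≤ ∑ i ∈ Finset.range d, P (Z i ⁻¹' S) :=
        hunion ▸ measure_biUnion_finset_le _ _
    _ = d * μ S := by
        simp_rw [← Measure.map_apply_of_aemeasurable (hZ _) hS, hlaw]
        simp

lemma measure_exists_le_mul_log_le {Ω α : Type*} [MeasurableSpace Ω] [MeasurableSpace α]
    {P : Measure Ω} {ν : Measure α} {Z : ℕ → Ω → α} (hZ : ∀ i, AEMeasurable (Z i) P)
    (hlaw : ∀ i, P.map (Z i) = ν) {f : α → ℝ} (hf : Measurable f) {c : ℝ} (hc : 0 < c)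
    {d : ℕ} (hd : 0 < d) :
    P {ω | ∃ i < d, Z i ω ∈ {x | 2 / c * log d ≤ f x}} ≤
      ENNReal.ofReal (1 / d) * ∫⁻ x, ENNReal.ofReal (exp (c * f x)) ∂ν := by
  have hd' : (0 : ℝ) < d := by exact_mod_cast hd
  calc _ ≤ d * ν {x | 2 / c * log d ≤ f x} :=
        measure_exists_lt_mem_le hZ hlaw (measurableSet_le measurable_const hf) d
    _ ≤ d * (ENNReal.ofReal (exp (-(c * (2 / c * log d)))) *
          ∫⁻ x, ENNReal.ofReal (exp (c * f x)) ∂ν) := by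
        gcongr
        exact measure_le_le_exp_mul_lintegral ν hf.aemeasurable hc.le _
    _ = _ := by
        rw [← mul_assoc, ← ENNReal.ofReal_natCast, ← ENNReal.ofReal_mul hd'.le]
        congr 2
        rw [show c * (2 / c * log d) = log d + log d by field_simp; ring, neg_add, exp_add,
          exp_neg, exp_log hd']
        field_simp

namespace Polynomial

lemma exists_abs_eval_le_mul_max_one_pow (p : ℝ[X]) {m : ℕ} (hm : p.natDegree ≤ m) :
    ∃ C > 0, ∀ z : ℝ, |p.eval z| ≤ C * max 1 |z| ^ m := by
  refine ⟨∑ i ∈ Finset.range (p.natDegree + 1), |p.coeff i| + 1, by positivity, fun z => ?_⟩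
  have hM : 1 ≤ max 1 |z| := le_max_left (1 : ℝ) _
  rw [eval_eq_sum_range]
  calc |∑ i ∈ Finset.range (p.natDegree + 1), p.coeff i * z ^ i|
      ≤ ∑ i ∈ Finset.range (p.natDegree + 1), |p.coeff i| * max 1 |z| ^ m := by
        refine (Finset.abs_sum_le_sum_abs _ _).trans (Finset.sum_le_sum fun i hi => ?_)
        rw [abs_mul, abs_pow]
        refine mul_le_mul_of_nonneg_left ?_ (abs_nonneg _)
        exact (pow_le_pow_left₀ (abs_nonneg z) (le_max_right _ _) i).trans
          (pow_le_pow_right₀ hM ((Nat.lt_succ_iff.mp (Finset.mem_range.mp hi)).trans hm))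
    _ ≤ _ := by rw [← Finset.sum_mul]; gcongr; linarith

variable {p : ℝ[X]}

lemma tendsto_eval_cocompact_atBot (hdeg : 0 < p.natDegree) (heven : Even p.natDegree)
    (hlead : p.leadingCoeff < 0) : Tendsto (fun x => p.eval x) (cocompact ℝ) atBot := by
  have hpos : 0 < p.degree := natDegree_pos_iff_degree_pos.mp hdeg
  set q := p.comp (-X)
  have hq_lead : q.leadingCoeff = p.leadingCoeff := by
    rw [leadingCoeff_comp (by simp), leadingCoeff_neg, leadingCoeff_X, heven.neg_one_pow, mul_one]
  have hq_pos : 0 < q.degree := by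
    rw [← natDegree_pos_iff_degree_pos, natDegree_comp]; simpa using hdeg
  have hneg : Tendsto (fun x => p.eval x) atBot atBot :=
    ((q.tendsto_atBot_of_leadingCoeff_nonpos hq_pos (hq_lead ▸ hlead.le)).comp
      tendsto_neg_atBot_atTop).congr fun x => by simp [q]
  rw [cocompact_eq_atBot_atTop]
  exact tendsto_sup.mpr ⟨hneg, p.tendsto_atBot_of_leadingCoeff_nonpos hpos hlead.le⟩

lemma coeff_add_C_mul_X_pow_natDegree (c : ℝ) :
    (p + C c * X ^ p.natDegree).coeff p.natDegree = p.leadingCoeff + c := by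
  rw [coeff_add, coeff_C_mul_X_pow, if_pos rfl, leadingCoeff]

lemma natDegree_add_C_mul_X_pow_natDegree {c : ℝ} (hc : p.leadingCoeff + c ≠ 0) :
    (p + C c * X ^ p.natDegree).natDegree = p.natDegree :=
  natDegree_eq_of_le_of_coeff_ne_zero
    (natDegree_add_le_of_degree_le le_rfl (natDegree_C_mul_X_pow_le _ _))
    (by rwa [coeff_add_C_mul_X_pow_natDegree])

lemma leadingCoeff_add_C_mul_X_pow_natDegree {c : ℝ} (hc : p.leadingCoeff + c ≠ 0) :
    (p + C c * X ^ p.natDegree).leadingCoeff = p.leadingCoeff + c := by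
  rw [leadingCoeff, natDegree_add_C_mul_X_pow_natDegree hc, coeff_add_C_mul_X_pow_natDegree]

lemma integrable_exp_eval (hdeg : 0 < p.natDegree) (heven : Even p.natDegree)
    (hlead : p.leadingCoeff < 0) : Integrable fun z => exp (p.eval z) := by
  set ε := -p.leadingCoeff / 2
  have hε : 0 < ε := div_pos (neg_pos.2 hlead) two_pos
  have hq : p.leadingCoeff + ε ≠ 0 := by simp only [ε]; linarith
  set q := p + C ε * X ^ p.natDegree
  obtain ⟨x₀, hx₀⟩ := q.continuous.exists_forall_ge <| q.tendsto_eval_cocompact_atBot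
    (by rwa [natDegree_add_C_mul_X_pow_natDegree hq])
    (by rwa [natDegree_add_C_mul_X_pow_natDegree hq])
    (by rw [leadingCoeff_add_C_mul_X_pow_natDegree hq]; simp only [ε]; linarith)
  refine ((integrable_exp_neg_mul_sq hε).const_mul (exp (q.eval x₀ + ε))).mono' (by fun_prop)
    (ae_of_all _ fun z => ?_)
  rw [norm_of_nonneg (exp_pos _).le, ← exp_add, exp_le_exp]
  have hqz : q.eval z = p.eval z + ε * z ^ p.natDegree := by simp [q]
  nlinarith [hx₀ z, sq_sub_one_le_pow heven hdeg z]

lemma lintegral_exp_mul_pow_tilted_lt_top (hdeg : 0 < p.natDegree) (heven : Even p.natDegree)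
    {c : ℝ} (hc : c < -p.leadingCoeff) :
    ∫⁻ z, ENNReal.ofReal (exp (c * z ^ p.natDegree)) ∂(volume.tilted fun z => p.eval z) < ⊤ := by
  have hq : p.leadingCoeff + c ≠ 0 := by linarith
  set q := p + C c * X ^ p.natDegree
  have hint := integrable_exp_eval (p := q) (by rwa [natDegree_add_C_mul_X_pow_natDegree hq])
    (by rwa [natDegree_add_C_mul_X_pow_natDegree hq])
    (by rw [leadingCoeff_add_C_mul_X_pow_natDegree hq]; linarith)
  rw [lintegral_tilted]
  convert (hint.div_const (∫ z, exp (p.eval z))).lintegral_lt_top using 3 with z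
  rw [← ENNReal.ofReal_mul' (exp_pos _).le, div_mul_eq_mul_div, ← exp_add]
  simp [q]

end Polynomial

theorem exists_tendsto_measure_exists_abs_eval_derivative_gt {Ω : Type*} [MeasurableSpace Ω]
    {P : Measure Ω} {ψ : ℝ[X]} {Z : ℕ → Ω → ℝ} (hdeg : 0 < ψ.natDegree)
    (heven : Even ψ.natDegree) (hlead : ψ.leadingCoeff < 0)
    (hlaw : ∀ i, P.map (Z i) = volume.tilted fun z => ψ.eval z) :
    ∃ C > (0 : ℝ), Tendsto (fun d : ℕ => P {ω | ∃ i < d,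
      C * log d ^ (1 - 1 / (ψ.natDegree : ℝ)) < |(derivative ψ).eval (Z i ω)|}) atTop (𝓝 0) := by
  set N := ψ.natDegree
  set γ : ℝ := 1 - 1 / (N : ℝ)
  have := isProbabilityMeasure_tilted (μ := volume) (integrable_exp_eval hdeg heven hlead)
  have hZ : ∀ i, AEMeasurable (Z i) P := fun i =>
    .of_map_ne_zero (by rw [hlaw i]; exact IsProbabilityMeasure.ne_zero _)
  set c := -ψ.leadingCoeff / 2
  have hc : 0 < c := div_pos (neg_pos.2 hlead) two_pos
  set M := ∫⁻ z, ENNReal.ofReal (exp (c * z ^ N)) ∂(volume.tilted fun z => ψ.eval z)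
  have hM : M < ⊤ := lintegral_exp_mul_pow_tilted_lt_top hdeg heven (by simp only [c]; linarith)
  obtain ⟨C, hC, hψ'⟩ :=
    (derivative ψ).exists_abs_eval_le_mul_max_one_pow (natDegree_derivative_le ψ)
  refine ⟨C * (2 / c) ^ γ, by positivity, ?_⟩
  have hbound : ∀ᶠ d : ℕ in atTop, P {ω | ∃ i < d,
      C * (2 / c) ^ γ * log d ^ γ < |(derivative ψ).eval (Z i ω)|} ≤
        ENNReal.ofReal (1 / d) * M := by
    filter_upwards [eventually_gt_atTop 0, ((tendsto_log_atTop.comp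
      tendsto_natCast_atTop_atTop).const_mul_atTop (div_pos two_pos hc)).eventually_ge_atTop 1]
      with d hd hlog
    replace hlog : 1 ≤ 2 / c * log d := hlog
    refine le_trans (measure_mono ?_)
      (measure_exists_le_mul_log_le hZ hlaw (f := fun z => z ^ N) (by fun_prop) hc hd)
    rintro ω ⟨i, hi, hlt⟩
    refine ⟨i, hi, (lt_pow_of_rpow_one_sub_inv_lt_max_one_pow hdeg heven hlog ?_).le⟩
    rw [mul_rpow (by positivity) (log_natCast_nonneg d)]
    exact lt_of_mul_lt_mul_left (by linarith [hψ' (Z i ω)]) hC.le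
  have hlim : Tendsto (fun d : ℕ => ENNReal.ofReal (1 / d) * M) atTop (𝓝 0) := by
    simpa using ENNReal.Tendsto.mul_const
      (ENNReal.tendsto_ofReal tendsto_one_div_atTop_nhds_zero_nat) (Or.inr hM.ne)
  exact tendsto_of_tendsto_of_tendsto_of_le_of_le' tendsto_const_nhds hlim
    (Eventually.of_forall fun _ => zero_le) hbound

theorem max_score_growth_exp_poly_general (n : ℕ) (hn : 0 < n) (ψ : Polynomial ℝ)
    (hdeg : ψ.natDegree = 2 * n) (hlead : ψ.leadingCoeff < 0)
    (A : ℝ) (hA : A = ∫ z : ℝ, Real.exp (ψ.eval z))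
    {Ω : Type*} [MeasurableSpace Ω] (P : Measure Ω)
    (Z : ℕ → Ω → ℝ)
    (hdist : ∀ i, Measure.map (Z i) P
      = volume.withDensity (fun z => ENNReal.ofReal (Real.exp (ψ.eval z) / A))) :
    ∃ C₄ > (0 : ℝ), Filter.Tendsto
      (fun d : ℕ => P {ω | ∃ i < d,
        C₄ * (Real.log d) ^ ((1 : ℝ) - 1 / (2 * n)) < |(Polynomial.derivative ψ).eval (Z i ω)|})
      Filter.atTop (nhds 0) := by
  have hγ : (1 : ℝ) - 1 / (2 * n) = 1 - 1 / (ψ.natDegree : ℝ) := by rw [hdeg]; push_cast; ring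
  rw [hγ]
  subst hA
  -- with `A` the normalising integral, `hdist` says that each `Z i` has law `volume.tilted ψ.eval`
  exact exists_tendsto_measure_exists_abs_eval_derivative_gt (by omega) (hdeg ▸ even_two_mul n)
    hlead hdist

/-- For `Z₁, …, Z_d` i.i.d. with density `q(z) = exp(ψ(z))/A`, `ψ` of
even degree `2n > 0` with negative leading coefficient, there exists `C₄ > 0` such
that `P(max_{1≤i≤d} |ψ'(Z_i)| > C₄ (log d)^(1 - 1/(2n))) → 0` as `d → ∞`.
(`ψ' = (d/dz) log q`.) -/
theorem max_score_growth_exp_poly (n : ℕ) (hn : 0 < n) (ψ : Polynomial ℝ)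
    (hdeg : ψ.natDegree = 2 * n) (hlead : ψ.leadingCoeff < 0)
    (A : ℝ) (hA : A = ∫ z : ℝ, Real.exp (ψ.eval z))
    {Ω : Type*} [MeasurableSpace Ω] (P : Measure Ω) [IsProbabilityMeasure P]
    (Z : ℕ → Ω → ℝ)
    (hindep : ProbabilityTheory.iIndepFun Z P)
    (hdist : ∀ i, Measure.map (Z i) P
      = volume.withDensity (fun z => ENNReal.ofReal (Real.exp (ψ.eval z) / A))) :
    ∃ C₄ > (0 : ℝ), Filter.Tendsto
      (fun d : ℕ => P {ω | ∃ i < d,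
        C₄ * (Real.log d) ^ ((1 : ℝ) - 1 / (2 * n)) < |(Polynomial.derivative ψ).eval (Z i ω)|})
      Filter.atTop (nhds 0) :=
  max_score_growth_exp_poly_general n hn ψ hdeg hlead A hA P Z hdist
end

section
/- Let Y ∼ Unif{±1}, and let (X₊, X₋) be a coupling of the laws of Z+μ and Z−μ (Z ∼ q) independent of Y. Define X = X₊ if Y = +1 and X = X₋ if Y = −1, and W = X₊ if X₊ = X₋, W = 0 otherwise. Then (X, Y) has the correct model distribution (X | Y = y has the law of Z + yμ), and W is independent of Y. -/
open MeasureTheory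

/-- Let `Y` be uniform on `{±1}` and `(X₊, X₋)` a coupling of the laws
of `Z + μ` and `Z - μ` (`Z ∼ q`), independent of `Y`. Define `X = X₊` if `Y = 1`,
`X = X₋` otherwise, and `W = X₊` if `X₊ = X₋`, `W = 0` otherwise. Then `(X, Y)` has
the correct model distribution (conditioned on `Y = y`, `X` has the law of `Z + yμ`),
and `W` is independent of `Y`. -/
theorem coupling_construction (q : ℝ → ℝ) (hpos : ∀ z, 0 < q z)
    (hprob : ∫ z : ℝ, q z = 1) (μ : ℝ)
    {Ω : Type*} [MeasurableSpace Ω] (P : Measure Ω) [IsProbabilityMeasure P]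
    (Y : Ω → ℝ) (hYmeas : Measurable Y)
    (hY1 : P {ω | Y ω = 1} = 1 / 2) (hY2 : P {ω | Y ω = -1} = 1 / 2)
    (Xp Xm : Ω → ℝ) (hXp : Measurable Xp) (hXm : Measurable Xm)
    (hlawp : Measure.map Xp P = volume.withDensity (fun x => ENNReal.ofReal (q (x - μ))))
    (hlawm : Measure.map Xm P = volume.withDensity (fun x => ENNReal.ofReal (q (x + μ))))
    (hindep : ProbabilityTheory.IndepFun (fun ω => (Xp ω, Xm ω)) Y P)
    (X W : Ω → ℝ)
    (hX : X = fun ω => if Y ω = 1 then Xp ω else Xm ω)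
    (hW : W = fun ω => if Xp ω = Xm ω then Xp ω else 0) :
    (∀ B : Set ℝ, MeasurableSet B →
      P ({ω | X ω ∈ B} ∩ {ω | Y ω = 1})
        = 1 / 2 * (volume.withDensity (fun x => ENNReal.ofReal (q (x - μ)))) B ∧
      P ({ω | X ω ∈ B} ∩ {ω | Y ω = -1})
        = 1 / 2 * (volume.withDensity (fun x => ENNReal.ofReal (q (x + μ)))) B) ∧
    ProbabilityTheory.IndepFun W Y P := by
  have hindp : ProbabilityTheory.IndepFun Xp Y P :=
    hindep.comp measurable_fst measurable_id
  have hindm : ProbabilityTheory.IndepFun Xm Y P :=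
    hindep.comp measurable_snd measurable_id
  constructor
  · intro B hB
    constructor
    · have hset : {ω | X ω ∈ B} ∩ {ω | Y ω = 1} = Xp ⁻¹' B ∩ Y ⁻¹' {1} := by
        ext ω
        simp only [hX, Set.mem_inter_iff, Set.mem_setOf_eq, Set.mem_preimage,
          Set.mem_singleton_iff]
        constructor
        · rintro ⟨h1, h2⟩; rw [if_pos h2] at h1; exact ⟨h1, h2⟩
        · rintro ⟨h1, h2⟩; exact ⟨by rw [if_pos h2]; exact h1, h2⟩
      rw [hset, hindp.measure_inter_preimage_eq_mul B {1} hB (measurableSet_singleton 1),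
        ← hlawp, Measure.map_apply hXp hB]
      have : Y ⁻¹' {1} = {ω | Y ω = 1} := rfl
      rw [this, hY1, mul_comm]
    · have hset : {ω | X ω ∈ B} ∩ {ω | Y ω = -1} = Xm ⁻¹' B ∩ Y ⁻¹' {-1} := by
        ext ω
        have hne : Y ω = -1 → ¬ Y ω = 1 := by intro h h'; rw [h'] at h; norm_num at h
        simp only [hX, Set.mem_inter_iff, Set.mem_setOf_eq, Set.mem_preimage,
          Set.mem_singleton_iff]
        constructor
        · rintro ⟨h1, h2⟩; rw [if_neg (hne h2)] at h1; exact ⟨h1, h2⟩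
        · rintro ⟨h1, h2⟩; exact ⟨by rw [if_neg (hne h2)]; exact h1, h2⟩
      rw [hset, hindm.measure_inter_preimage_eq_mul B {-1} hB (measurableSet_singleton (-1)),
        ← hlawm, Measure.map_apply hXm hB]
      have : Y ⁻¹' {-1} = {ω | Y ω = -1} := rfl
      rw [this, hY2, mul_comm]
  · have hf : Measurable (fun p : ℝ × ℝ => if p.1 = p.2 then p.1 else 0) := by
      apply Measurable.ite (measurableSet_eq_fun measurable_fst measurable_snd)
        measurable_fst measurable_const
    have : W = (fun p : ℝ × ℝ => if p.1 = p.2 then p.1 else 0) ∘ (fun ω => (Xp ω, Xm ω)) := by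
      ext ω; simp [hW]
    rw [this]
    exact hindep.comp hf measurable_id
end

section
/- Let Z₁, …, Z_d be i.i.d. with density q satisfying Assumptions 3 and 4 of the paper, μ_d = c/√d (c ≠ 0), and x̃_i^{(d)} = log(q(Z_i)/q(Z_i + 2μ_d)). If k_d < d^{1/2 − ε} for some ε > 0, then k_d · max_{1≤i≤d} |x̃_i^{(d)}| → 0 in probability as d → ∞. -/
/-!
With `f = log q` and the step `b = 2c/√d`, Taylor's theorem bounds each
`|log (q Zᵢ / q (Zᵢ + b))|` by `|b| |f' Zᵢ| + b² Sᵢ`, where `Sᵢ` is the supremum of `|f''|` on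
`[Zᵢ - ζ, Zᵢ + ζ]`. Since `k_d ≤ d^(1/2 - ε)`, the first term times `k_d` is at most
`2|c| C₄ (log d)^γ / d^ε → 0` off the event excluded by Assumption 4. For the second, the
union bound and Chebyshev's inequality with the second moment of Assumption 3 give
`P(maxᵢ Sᵢ ≥ s √d d^ε) ≤ d E[S²] / (s² d^(1 + 2ε)) → 0`, and below that threshold
`k_d b² maxᵢ Sᵢ ≤ 4c² s`, which is small for a suitable choice of `s`.
-/

open MeasureTheory Filter Real Set Topology

theorem abs_sub_sub_mul_deriv_le {f : ℝ → ℝ} (hf : Differentiable ℝ f)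
    (hf' : Differentiable ℝ (deriv f)) {z h M : ℝ}
    (hM : ∀ t ∈ uIcc z (z + h), |deriv (deriv f) t| ≤ M) :
    |f (z + h) - f z - h * deriv f z| ≤ M * h ^ 2 := by
  have hz : z ∈ uIcc z (z + h) := left_mem_uIcc
  have hzh : z + h ∈ uIcc z (z + h) := right_mem_uIcc
  have hM0 : 0 ≤ M := (abs_nonneg _).trans (hM z hz)
  have hlip : ∀ t ∈ uIcc z (z + h), ‖deriv f t - deriv f z‖ ≤ M * |h| := fun t ht => by
    calc ‖deriv f t - deriv f z‖ ≤ M * ‖t - z‖ :=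
          (convex_uIcc _ _).norm_image_sub_le_of_norm_deriv_le (fun x _ => hf' x) hM hz ht
      _ ≤ M * |h| := by
          gcongr
          simpa using abs_sub_left_of_mem_uIcc ht
  have hmvt := (convex_uIcc z (z + h)).norm_image_sub_le_of_norm_hasDerivWithin_le
    (f := fun t => f t - t * deriv f z)
    (fun t _ => ((hf t).hasDerivAt.sub (hasDerivAt_mul_const _)).hasDerivWithinAt) hlip hz hzh
  calc |f (z + h) - f z - h * deriv f z|
      = ‖(f (z + h) - (z + h) * deriv f z) - (f z - z * deriv f z)‖ := by
        rw [Real.norm_eq_abs]; ring_nf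
    _ ≤ M * |h| * ‖z + h - z‖ := hmvt
    _ = M * h ^ 2 := by simp [mul_assoc, abs_mul_abs_self, sq]

noncomputable def localSupAbs (g : ℝ → ℝ) (ζ z : ℝ) : ℝ :=
  sSup ((fun t => |g t|) '' Icc (z - ζ) (z + ζ))

theorem abs_le_localSupAbs {g : ℝ → ℝ} (hg : Continuous g) {ζ z t : ℝ}
    (ht : t ∈ Icc (z - ζ) (z + ζ)) : |g t| ≤ localSupAbs g ζ z :=
  le_csSup (isCompact_Icc.image hg.abs).bddAbove (mem_image_of_mem _ ht)

theorem lowerSemicontinuous_localSupAbs {g : ℝ → ℝ} (hg : Continuous g) {ζ : ℝ} (hζ : 0 ≤ ζ) :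
    LowerSemicontinuous (localSupAbs g ζ) := by
  intro z₀ y hy
  obtain ⟨_, ⟨t, ht, rfl⟩, hyt⟩ :=
    exists_lt_of_lt_csSup ((nonempty_Icc.mpr (by linarith)).image _) hy
  have hcont : Continuous fun z => |g (t + (z - z₀))| := by fun_prop
  filter_upwards [hcont.continuousAt.eventually (eventually_gt_nhds (by simpa using hyt))]
    with z hz
  exact hz.trans_le (abs_le_localSupAbs hg ⟨by linarith [ht.1], by linarith [ht.2]⟩)

theorem abs_sub_le_of_contDiff_two {f : ℝ → ℝ} (hf : ContDiff ℝ 2 f) {ζ a b : ℝ}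
    (hb : |b| ≤ ζ) :
    |f (a + b) - f a| ≤ |b| * |deriv f a| + b ^ 2 * localSupAbs (deriv (deriv f)) ζ a := by
  have hf'' : Continuous (deriv (deriv f)) := (hf.deriv' (n := 1)).continuous_deriv le_rfl
  have htaylor := abs_sub_sub_mul_deriv_le (hf.differentiable two_ne_zero)
    hf.differentiable_deriv_two (M := localSupAbs (deriv (deriv f)) ζ a) (h := b)
    fun t ht => abs_le_localSupAbs hf'' <| by
      have := abs_sub_left_of_mem_uIcc ht
      rw [add_sub_cancel_left] at this
      exact ⟨by linarith [neg_abs_le (t - a)], by linarith [le_abs_self (t - a)]⟩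
  calc |f (a + b) - f a| ≤ |f (a + b) - f a - b * deriv f a| + |b * deriv f a| :=
        by linarith [abs_sub_abs_le_abs_sub (f (a + b) - f a) (b * deriv f a)]
    _ ≤ |b| * |deriv f a| + b ^ 2 * localSupAbs (deriv (deriv f)) ζ a := by
        rw [abs_mul]; linarith

theorem iSup_abs_log_div_le {ι : Type*} [Nonempty ι] {q : ℝ → ℝ} (hq : ContDiff ℝ 2 q)
    (hpos : ∀ z, 0 < q z) {ζ b L τ : ℝ} (hb : |b| ≤ ζ) (x : ι → ℝ)
    (hL : ∀ i, |deriv (fun s => log (q s)) (x i)| ≤ L)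
    (hτ : ∀ i, localSupAbs (deriv (deriv fun s => log (q s))) ζ (x i) ≤ τ) :
    ⨆ i, |log (q (x i) / q (x i + b))| ≤ |b| * L + b ^ 2 * τ := by
  refine ciSup_le fun i => ?_
  have hlog := abs_sub_le_of_contDiff_two (hq.log fun z => (hpos z).ne') (a := x i) hb
  rw [log_div (hpos _).ne' (hpos _).ne', abs_sub_comm]
  refine hlog.trans ?_
  gcongr
  exacts [hL i, hτ i]

theorem aemeasurable_of_map_eq_withDensity {Ω : Type*} [MeasurableSpace Ω] {P : Measure Ω}
    {X : Ω → ℝ} {q : ℝ → ℝ} (hq : Measurable q) (hpos : ∀ z, 0 < q z)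
    (hX : P.map X = volume.withDensity fun z => ENNReal.ofReal (q z)) : AEMeasurable X P := by
  refine AEMeasurable.of_map_ne_zero fun h0 => ?_
  rw [hX, withDensity_eq_zero_iff hq.ennreal_ofReal.aemeasurable] at h0
  obtain ⟨z, hz⟩ := h0.exists
  simp only [Pi.zero_apply, ENNReal.ofReal_eq_zero] at hz
  exact (hpos z).not_ge hz

theorem withDensity_setOf_le_le {q S : ℝ → ℝ} (hq : Measurable q) (hq0 : ∀ z, 0 ≤ q z)
    (hS : Measurable S) (hS2 : Integrable fun z => S z ^ 2 * q z) {τ : ℝ} (hτ : 0 < τ) :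
    volume.withDensity (fun z => ENNReal.ofReal (q z)) {z | τ ≤ S z} ≤
      ENNReal.ofReal ((∫ z, S z ^ 2 * q z) / τ ^ 2) := by
  set ν := volume.withDensity fun z => ENNReal.ofReal (q z)
  have hlint : ∫⁻ z, ENNReal.ofReal (S z ^ 2) ∂ν = ENNReal.ofReal (∫ z, S z ^ 2 * q z) := by
    rw [lintegral_withDensity_eq_lintegral_mul _ hq.ennreal_ofReal
      (hS.pow_const 2).ennreal_ofReal, ofReal_integral_eq_lintegral_ofReal hS2
      (Eventually.of_forall fun z => mul_nonneg (sq_nonneg _) (hq0 z))]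
    refine lintegral_congr fun z => ?_
    rw [Pi.mul_apply, ← ENNReal.ofReal_mul (hq0 z), mul_comm]
  calc ν {z | τ ≤ S z} ≤ ν {z | ENNReal.ofReal (τ ^ 2) ≤ ENNReal.ofReal (S z ^ 2)} :=
        measure_mono fun z (hz : τ ≤ S z) => ENNReal.ofReal_le_ofReal (by gcongr)
    _ ≤ (∫⁻ z, ENNReal.ofReal (S z ^ 2) ∂ν) / ENNReal.ofReal (τ ^ 2) :=
        meas_ge_le_lintegral_div (hS.pow_const 2).ennreal_ofReal.aemeasurable
          (by simpa using hτ.ne') ENNReal.ofReal_ne_top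
    _ = ENNReal.ofReal ((∫ z, S z ^ 2 * q z) / τ ^ 2) := by
        rw [hlint, ENNReal.ofReal_div_of_pos (by positivity)]

theorem tendsto_measure_exists_le_sqrt_mul_rpow {Ω : Type*} [MeasurableSpace Ω]
    {P : Measure Ω} {X : ℕ → Ω → ℝ} {E : ℝ}
    (htail : ∀ i τ, 0 < τ → P {ω | τ ≤ X i ω} ≤ ENNReal.ofReal (E / τ ^ 2))
    {s ε : ℝ} (hs : 0 < s) (hε : 0 < ε) :
    Tendsto (fun d : ℕ => P {ω | ∃ i < d, s * √d * (d : ℝ) ^ ε ≤ X i ω}) atTop (𝓝 0) := by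
  have hrate : Tendsto (fun d : ℕ => E / s ^ 2 * (((d : ℝ) ^ ε) ^ 2)⁻¹) atTop (𝓝 0) := by
    have := (tendsto_pow_atTop two_ne_zero).comp
      ((tendsto_rpow_atTop hε).comp tendsto_natCast_atTop_atTop)
    simpa using this.inv_tendsto_atTop.const_mul (E / s ^ 2)
  refine tendsto_of_tendsto_of_tendsto_of_le_of_le' tendsto_const_nhds
    (by simpa using ENNReal.tendsto_ofReal hrate) (Eventually.of_forall fun _ => zero_le) ?_
  filter_upwards [eventually_gt_atTop 0] with d hd
  have hd' : (0 : ℝ) < d := Nat.cast_pos.mpr hd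
  have hτ : 0 < s * √d * (d : ℝ) ^ ε := by positivity
  calc P {ω | ∃ i < d, s * √d * (d : ℝ) ^ ε ≤ X i ω}
      ≤ P (⋃ i ∈ Finset.range d, {ω | s * √d * (d : ℝ) ^ ε ≤ X i ω}) :=
        measure_mono fun ω ⟨i, hi, hω⟩ => by simpa using ⟨i, hi, hω⟩
    _ ≤ ∑ i ∈ Finset.range d, P {ω | s * √d * (d : ℝ) ^ ε ≤ X i ω} :=
        measure_biUnion_finset_le _ _
    _ ≤ ∑ _i ∈ Finset.range d, ENNReal.ofReal (E / (s * √d * (d : ℝ) ^ ε) ^ 2) :=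
        Finset.sum_le_sum fun i _ => htail i _ hτ
    _ = ENNReal.ofReal (E / s ^ 2 * (((d : ℝ) ^ ε) ^ 2)⁻¹) := by
        rw [Finset.sum_const, Finset.card_range, nsmul_eq_mul, ← ENNReal.ofReal_natCast,
          ← ENNReal.ofReal_mul hd'.le]
        congr 1
        rw [mul_pow, mul_pow, sq_sqrt hd'.le]
        field_simp

theorem measure_setOf_le_comp_le {Ω : Type*} [MeasurableSpace Ω] {P : Measure Ω}
    {X : Ω → ℝ} {q S : ℝ → ℝ} (hq : Measurable q) (hpos : ∀ z, 0 < q z)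
    (hX : P.map X = volume.withDensity fun z => ENNReal.ofReal (q z))
    (hS : Measurable S) (hS2 : Integrable fun z => S z ^ 2 * q z) {τ : ℝ} (hτ : 0 < τ) :
    P {ω | τ ≤ S (X ω)} ≤ ENNReal.ofReal ((∫ z, S z ^ 2 * q z) / τ ^ 2) := by
  have hX' := aemeasurable_of_map_eq_withDensity hq hpos hX
  rw [show {ω | τ ≤ S (X ω)} = X ⁻¹' {z | τ ≤ S z} from rfl,
    ← Measure.map_apply_of_aemeasurable hX' (measurableSet_le measurable_const hS), hX]
  exact withDensity_setOf_le_le hq (fun z => (hpos z).le) hS hS2 hτ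

theorem natCast_mul_rpow_lt_sqrt {k : ℕ} {d ε : ℝ} (hd : 0 < d)
    (hk : (k : ℝ) < d ^ ((1 : ℝ) / 2 - ε)) : k * d ^ ε < √d :=
  calc k * d ^ ε < d ^ ((1 : ℝ) / 2 - ε) * d ^ ε := by gcongr
    _ = √d := by rw [← rpow_add hd, sqrt_eq_rpow, sub_add_cancel]

theorem natCast_mul_step_le {k : ℕ} {d ε c s L : ℝ} (hd : 0 < d) (hk : k * d ^ ε < √d)
    (hs : 0 ≤ s) (hL : 0 ≤ L) :
    k * (|2 * (c / √d)| * L + (2 * (c / √d)) ^ 2 * (s * √d * d ^ ε)) ≤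
      2 * |c| * L / d ^ ε + 4 * c ^ 2 * s := by
  have hr : 0 < √d := sqrt_pos.mpr hd
  have he : 0 < d ^ ε := rpow_pos_of_pos hd ε
  have hk' : (k : ℝ) / √d ≤ 1 / d ^ ε := by
    rw [div_le_div_iff₀ hr he]; linarith
  have hk'' : (k : ℝ) * d ^ ε / √d ≤ 1 := (div_le_one hr).mpr hk.le
  have hexpand : k * (|2 * (c / √d)| * L + (2 * (c / √d)) ^ 2 * (s * √d * d ^ ε)) =
      2 * |c| * L * (k / √d) + 4 * c ^ 2 * s * (k * d ^ ε / √d) := by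
    rw [abs_mul, abs_div, abs_of_pos hr, abs_two]
    field_simp
    ring
  rw [hexpand]
  have h1 : 2 * |c| * L * (k / √d) ≤ 2 * |c| * L * (1 / d ^ ε) := by gcongr
  have h2 : 4 * c ^ 2 * s * (k * d ^ ε / √d) ≤ 4 * c ^ 2 * s * 1 := by gcongr
  rw [mul_one_div] at h1
  linarith

theorem eventually_abs_two_mul_div_sqrt_le (c : ℝ) {ζ : ℝ} (hζ : 0 < ζ) :
    ∀ᶠ d : ℕ in atTop, |2 * (c / √d)| ≤ ζ := by
  have : Tendsto (fun d : ℕ => 2 * (c / √d)) atTop (𝓝 0) := by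
    simpa using (tendsto_const_nhds.div_atTop
      (tendsto_sqrt_atTop.comp tendsto_natCast_atTop_atTop)).const_mul 2
  filter_upwards [this.eventually (eventually_abs_sub_lt 0 hζ)] with d hd
  simpa using hd.le

theorem eventually_mul_log_rpow_div_rpow_lt (C γ : ℝ) {ε η : ℝ} (hε : 0 < ε) (hη : 0 < η) :
    ∀ᶠ d : ℕ in atTop, C * log d ^ γ / (d : ℝ) ^ ε < η := by
  have := ((isLittleO_log_rpow_rpow_atTop γ hε).tendsto_div_nhds_zero.comp
    tendsto_natCast_atTop_atTop).const_mul C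
  filter_upwards [this.eventually (eventually_lt_nhds (by rwa [mul_zero]))] with d hd
  simpa [mul_div_assoc] using hd

theorem kd_max_loglik_tendsto_zero_general (q : ℝ → ℝ) (hpos : ∀ z, 0 < q z)
    (hsmooth : ContDiff ℝ 2 q)
    (ζ : ℝ) (hζ : 0 < ζ)
    -- Assumption 3 (second-derivative square moment)
    (hmom2 : Integrable (fun z : ℝ =>
      (sSup ((fun t => |deriv (deriv (fun s => Real.log (q s))) t|)
        '' Set.Icc (z - ζ) (z + ζ))) ^ 2 * q z))
    (c : ℝ)
    {Ω : Type*} [MeasurableSpace Ω] (P : Measure Ω)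
    (Z : ℕ → Ω → ℝ)
    (hdist : ∀ i, Measure.map (Z i) P = volume.withDensity (fun z => ENNReal.ofReal (q z)))
    -- Assumption 4 (max-score logarithmic growth)
    (hmaxscore : ∃ γ > (0 : ℝ), ∃ C₄ > (0 : ℝ), Tendsto
      (fun d : ℕ => P {ω | ∃ i < d,
        C₄ * (Real.log d) ^ γ < |deriv (fun s => Real.log (q s)) (Z i ω)|})
      atTop (nhds 0))
    -- adversary's budget
    (k : ℕ → ℕ) (ε : ℝ) (hε : 0 < ε)
    (hk : ∀ d : ℕ, 0 < d → (k d : ℝ) < (d : ℝ) ^ ((1 : ℝ) / 2 - ε)) :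
    ∀ η > (0 : ℝ), Tendsto
      (fun d : ℕ => P {ω | η ≤ (k d : ℝ) *
        ⨆ i : Fin d, |Real.log (q (Z i.val ω) / q (Z i.val ω + 2 * (c / Real.sqrt d)))|})
      atTop (nhds 0) := by
  intro η hη
  obtain ⟨γ, -, C₄, hC₄, hA⟩ := hmaxscore
  set S := localSupAbs (deriv (deriv fun s => log (q s))) ζ
  have hS : Measurable S := (lowerSemicontinuous_localSupAbs
    (((hsmooth.log fun z => (hpos z).ne').deriv' (n := 1)).continuous_deriv le_rfl)
    hζ.le).measurable
  set s := η / (8 * c ^ 2 + 1)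
  have hs : 4 * c ^ 2 * s < η / 2 := by
    rw [mul_div_assoc', div_lt_div_iff₀ (by positivity) two_pos]; nlinarith [sq_nonneg c]
  have hB := tendsto_measure_exists_le_sqrt_mul_rpow (P := P) (X := fun i ω => S (Z i ω))
    (fun i _ hτ => measure_setOf_le_comp_le hsmooth.continuous.measurable hpos (hdist i) hS
      hmom2 hτ) (by positivity : 0 < s) hε
  refine tendsto_of_tendsto_of_tendsto_of_le_of_le' tendsto_const_nhds
    (by simpa using hA.add hB) (Eventually.of_forall fun _ => zero_le) ?_
  filter_upwards [eventually_mul_log_rpow_div_rpow_lt (2 * |c| * C₄) γ hε (half_pos hη),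
    eventually_abs_two_mul_div_sqrt_le c hζ, eventually_gt_atTop 0] with d hsmall hstep hd
  have hd' : (0 : ℝ) < d := Nat.cast_pos.mpr hd
  have : Nonempty (Fin d) := ⟨⟨0, hd⟩⟩
  refine (measure_mono fun ω (hω : η ≤ _) => ?_).trans (measure_union_le _ _)
  by_contra hgood
  simp only [mem_union, mem_ofPred_eq, not_or, not_exists, not_and, not_lt, not_le] at hgood
  have hsup := iSup_abs_log_div_le hsmooth hpos hstep (fun i : Fin d => Z i ω)
    (fun i => hgood.1 i i.2) (fun i => (hgood.2 i i.2).le)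
  have hbudget := natCast_mul_step_le (c := c) hd' (natCast_mul_rpow_lt_sqrt hd' (hk d hd))
    (by positivity : 0 ≤ s) (by positivity : 0 ≤ C₄ * log d ^ γ)
  have := mul_le_mul_of_nonneg_left hsup (Nat.cast_nonneg (k d))
  rw [mul_assoc] at hsmall
  linarith

/-- Let `Z₁, …, Z_d` be i.i.d. with density `q` satisfying Assumptions 3
(second-derivative square moment) and 4 (max-score logarithmic growth) of the paper,
with `μ_d = c/√d` (`c ≠ 0`), and set `x̃ᵢ⁽ᵈ⁾ = log(q(Zᵢ)/q(Zᵢ + 2μ_d))`. If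
`k_d < d^{1/2-ε}` for some `ε > 0`, then `k_d · maxᵢ |x̃ᵢ⁽ᵈ⁾| → 0` in probability. -/
theorem kd_max_loglik_tendsto_zero (q : ℝ → ℝ) (hpos : ∀ z, 0 < q z)
    (hsmooth : ContDiff ℝ 2 q)
    (hprob : ∫ z : ℝ, q z = 1)
    (ζ : ℝ) (hζ : 0 < ζ)
    -- Assumption 3 (second-derivative square moment)
    (hmom2 : Integrable (fun z : ℝ =>
      (sSup ((fun t => |deriv (deriv (fun s => Real.log (q s))) t|)
        '' Set.Icc (z - ζ) (z + ζ))) ^ 2 * q z))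
    (c : ℝ) (hc : c ≠ 0)
    {Ω : Type*} [MeasurableSpace Ω] (P : Measure Ω) [IsProbabilityMeasure P]
    (Z : ℕ → Ω → ℝ)
    (hindep : ProbabilityTheory.iIndepFun Z P)
    (hdist : ∀ i, Measure.map (Z i) P = volume.withDensity (fun z => ENNReal.ofReal (q z)))
    -- Assumption 4 (max-score logarithmic growth)
    (hmaxscore : ∃ γ > (0 : ℝ), ∃ C₄ > (0 : ℝ), Tendsto
      (fun d : ℕ => P {ω | ∃ i < d,
        C₄ * (Real.log d) ^ γ < |deriv (fun s => Real.log (q s)) (Z i ω)|})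
      atTop (nhds 0))
    -- adversary's budget
    (k : ℕ → ℕ) (ε : ℝ) (hε : 0 < ε)
    (hk : ∀ d : ℕ, 0 < d → (k d : ℝ) < (d : ℝ) ^ ((1 : ℝ) / 2 - ε)) :
    ∀ η > (0 : ℝ), Tendsto
      (fun d : ℕ => P {ω | η ≤ (k d : ℝ) *
        ⨆ i : Fin d, |Real.log (q (Z i.val ω) / q (Z i.val ω + 2 * (c / Real.sqrt d)))|})
      atTop (nhds 0) :=
  kd_max_loglik_tendsto_zero_general q hpos hsmooth ζ hζ hmom2 c P Z hdist hmaxscore k ε hε hk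
end
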